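/- For every integer d with 5 ≤ d ≤ 9 and every T > 0, the function 𝐰_T(t,r) = (T−t)^{−1} 𝐖_d(r/√(T−t)), where 𝐖_d(ρ) = −1/(a₁(d) ρ² + a₂(d)) with a₁(d) = √(d−2)/(2√2) and a₂(d) = (1/2)(6d − 12 − (d+2)√(2d−4)), satisfies the equivariant Yang–Mills heat flow equation ∂_t 𝐰_T(t,r) − ∂_r² 𝐰_T(t,r) − ((d+1)/r) ∂_r 𝐰_T(t,r) + 3(d−2) 𝐰_T(t,r)² + (d−2) r² 𝐰_T(t,r)³ = 0 for all 0 < t < T and all r > 0. -/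

import Mathlib

open Set

/-- `a₁(d) = √(d−2)/(2√2)`. -/
noncomputable def a1 (d : ℕ) : ℝ := Real.sqrt ((d : ℝ) - 2) / (2 * Real.sqrt 2)

/-- `a₂(d) = (1/2)(6d − 12 − (d+2)√(2d−4))`. -/
noncomputable def a2 (d : ℕ) : ℝ :=
  (1/2) * (6 * (d : ℝ) - 12 - ((d : ℝ) + 2) * Real.sqrt (2 * (d : ℝ) - 4))

/-- The Weinkove profile `𝐖_d(ρ) = −1/(a₁(d)ρ² + a₂(d))`. -/
noncomputable def Wprof (d : ℕ) (ρ : ℝ) : ℝ := -(1 / (a1 d * ρ^2 + a2 d))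

/-- The self-similar solution `𝐰_T(t,r) = (T−t)⁻¹ 𝐖_d(r/√(T−t))`. -/
noncomputable def wSol (d : ℕ) (T t r : ℝ) : ℝ := (T - t)⁻¹ * Wprof d (r / Real.sqrt (T - t))

lemma a1_pos (d : ℕ) (hd5 : 5 ≤ d) : 0 < a1 d := by
  have : (5:ℝ) ≤ d := by exact_mod_cast hd5
  have h : (0:ℝ) < (d:ℝ) - 2 := by linarith
  rw [a1]; positivity

lemma a1_sq (d : ℕ) (hd5 : 5 ≤ d) : a1 d ^ 2 = ((d:ℝ) - 2) / 8 := by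
  have : (5:ℝ) ≤ d := by exact_mod_cast hd5
  rw [a1, div_pow, mul_pow, Real.sq_sqrt (by linarith), Real.sq_sqrt (by norm_num : (0:ℝ) ≤ 2)]
  norm_num

lemma a2_eq (d : ℕ) (hd5 : 5 ≤ d) : a2 d = 3*((d:ℝ)-2) - 2*a1 d*((d:ℝ)+2) := by
  have hd : (5:ℝ) ≤ d := by exact_mod_cast hd5
  have h : Real.sqrt (2*(d:ℝ) - 4) = Real.sqrt 2 * Real.sqrt ((d:ℝ) - 2) := by
    rw [← Real.sqrt_mul (by norm_num : (0:ℝ) ≤ 2)]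
    ring_nf
  have h2ne : Real.sqrt 2 ≠ 0 := by positivity
  rw [a2, a1, h]
  field_simp
  linear_combination (-((d:ℝ)+2)*Real.sqrt ((d:ℝ)-2)) * Real.mul_self_sqrt (by norm_num : (0:ℝ) ≤ 2)

lemma a2_pos (d : ℕ) (hd5 : 5 ≤ d) (hd9 : d ≤ 9) : 0 < a2 d := by
  have hd5' : (5:ℝ) ≤ d := by exact_mod_cast hd5
  have hd9' : (d:ℝ) ≤ 9 := by exact_mod_cast hd9
  have h0 : (0:ℝ) ≤ 2*(d:ℝ) - 4 := by linarith
  have hs := Real.sq_sqrt h0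
  have hs0 := Real.sqrt_nonneg (2*(d:ℝ) - 4)
  rw [a2]
  nlinarith [hs, hs0, sq_nonneg (Real.sqrt (2*(d:ℝ)-4) - 3), mul_nonneg hs0 hs0]


/-- For `5 ≤ d ≤ 9` and `T > 0`, the Weinkove solution solves the equivariant Yang–Mills
heat flow equation
`∂ₜ𝐰 − ∂ᵣ²𝐰 − ((d+1)/r)∂ᵣ𝐰 + 3(d−2)𝐰² + (d−2)r²𝐰³ = 0` on `(0,T) × (0,∞)`. -/
theorem stmt1 (d : ℕ) (hd5 : 5 ≤ d) (hd9 : d ≤ 9) (T : ℝ) (hT : 0 < T) :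
    ∀ t : ℝ, 0 < t → t < T → ∀ r : ℝ, 0 < r →
      deriv (fun t' => wSol d T t' r) t
        - deriv (deriv (fun r' => wSol d T t r')) r
        - (((d : ℝ) + 1) / r) * deriv (fun r' => wSol d T t r') r
        + 3 * ((d : ℝ) - 2) * (wSol d T t r)^2
        + ((d : ℝ) - 2) * r^2 * (wSol d T t r)^3 = 0 := by
  intro t ht htT r hr
  have hd5' : (5:ℝ) ≤ d := by exact_mod_cast hd5
  have hTt : 0 < T - t := by linarith
  have ha1 : 0 < a1 d := a1_pos d hd5
  have ha2 : 0 < a2 d := a2_pos d hd5 hd9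
  have ha1sq : a1 d ^ 2 = ((d:ℝ) - 2)/8 := a1_sq d hd5
  have ha2eq : a2 d = 3*((d:ℝ)-2) - 2*a1 d*((d:ℝ)+2) := a2_eq d hd5
  -- closed form of the solution
  have hw : ∀ t' r' : ℝ, t' < T → wSol d T t' r' = -(a1 d * r'^2 + a2 d * (T - t'))⁻¹ := by
    intro t' r' ht'
    have h1 : (0:ℝ) < T - t' := by linarith
    have hs : Real.sqrt (T - t') ^ 2 = T - t' := Real.sq_sqrt h1.le
    have hD : 0 < a1 d * r'^2 + a2 d * (T - t') :=
      add_pos_of_nonneg_of_pos (by positivity) (by positivity)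
    have hne0 : a1 d * (r'^2 / (T - t')) + a2 d ≠ 0 := by
      have h3 : 0 ≤ a1 d * (r'^2 / (T - t')) := by positivity
      positivity
    rw [wSol, Wprof, div_pow, hs]
    field_simp
  have hDpos : ∀ x : ℝ, 0 < a1 d * x^2 + a2 d * (T - t) := fun x =>
    add_pos_of_nonneg_of_pos (by positivity) (by positivity)
  set D : ℝ := a1 d * r^2 + a2 d * (T - t) with hDdef
  have hD : 0 < D := hDpos r
  -- time derivative
  have hEt : deriv (fun t' => wSol d T t' r) t = -(a2 d) / D^2 := by
    have hDt : HasDerivAt (fun t' : ℝ => a1 d * r^2 + a2 d * (T - t')) (-(a2 d)) t := by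
      have h1 := (((hasDerivAt_id t).const_sub T).const_mul (a2 d)).const_add (a1 d * r^2)
      simpa using h1
    have h2 := (hDt.inv hD.ne').neg
    have hev : (fun t' => wSol d T t' r) =ᶠ[nhds t]
        (fun t' => -(a1 d * r^2 + a2 d * (T - t'))⁻¹) := by
      filter_upwards [Iio_mem_nhds htT] with x hx
      exact hw x r hx
    rw [hev.deriv_eq, show (fun t' => -(a1 d * r^2 + a2 d * (T - t'))⁻¹) = -(fun t' => a1 d * r^2 + a2 d * (T - t'))⁻¹ from rfl, h2.deriv]
    field_simp
    rfl
  -- space function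
  have hgeq : (fun r' => wSol d T t r') = fun r' => -(a1 d * r'^2 + a2 d * (T - t))⁻¹ := by
    funext r'; exact hw t r' htT
  have hDx : ∀ x : ℝ, HasDerivAt (fun r' : ℝ => a1 d * r'^2 + a2 d * (T - t)) (2 * a1 d * x) x := by
    intro x
    have h1 := ((hasDerivAt_pow 2 x).const_mul (a1 d)).add_const (a2 d * (T - t))
    exact h1.congr_deriv (by ring)
  have hg1 : ∀ x : ℝ, HasDerivAt (fun r' : ℝ => -(a1 d * r'^2 + a2 d * (T - t))⁻¹)
      (2 * a1 d * x / (a1 d * x^2 + a2 d * (T - t))^2) x := by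
    intro x
    have h2 := ((hDx x).inv (hDpos x).ne').neg
    exact h2.congr_deriv (by ring)
  have hderiv_g : deriv (fun r' : ℝ => -(a1 d * r'^2 + a2 d * (T - t))⁻¹)
      = fun x => 2 * a1 d * x / (a1 d * x^2 + a2 d * (T - t))^2 := by
    funext x; exact (hg1 x).deriv
  -- second derivative
  have hden : HasDerivAt (fun x : ℝ => (a1 d * x^2 + a2 d * (T - t))^2)
      (2 * D * (2 * a1 d * r)) r := by
    have := (hDx r).pow 2
    exact this.congr_deriv (by rw [hDdef]; ring)
  have hg2 : HasDerivAt (fun x : ℝ => 2 * a1 d * x / (a1 d * x^2 + a2 d * (T - t))^2)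
      ((2 * a1 d * D^2 - 2 * a1 d * r * (2 * D * (2 * a1 d * r))) / (D^2)^2) r := by
    have hnum : HasDerivAt (fun x : ℝ => 2 * a1 d * x) (2 * a1 d) r := by
      simpa using (hasDerivAt_id r).const_mul (2 * a1 d)
    exact hnum.div hden (by positivity)
  have hE2 : deriv (deriv (fun r' => wSol d T t r')) r
      = (2 * a1 d * D^2 - 2 * a1 d * r * (2 * D * (2 * a1 d * r))) / (D^2)^2 := by
    rw [hgeq, hderiv_g, hg2.deriv]
  have hE1 : deriv (fun r' => wSol d T t r') r = 2 * a1 d * r / D^2 := by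
    rw [hgeq, hderiv_g]
  have hw0 : wSol d T t r = -D⁻¹ := hw t r htT
  rw [hEt, hE2, hE1, hw0, ha2eq]
  have h8 : 8 * a1 d ^ 2 = (d:ℝ) - 2 := by rw [ha1sq]; ring
  clear_value D
  have hDne : D ≠ 0 := hD.ne'
  have hrne : r ≠ 0 := hr.ne'
  linear_combination (r^2 / D^3) * h8
    + (-2*a1 d*(D⁻¹)^2*((d:ℝ)+1)) * mul_inv_cancel₀ hrne
    + (-2*a1 d*(D⁻¹)^2*(D*D⁻¹+1) + 8*(a1 d)^2*(D⁻¹)^3*r^2) * mul_inv_cancel₀ hDne
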